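/- arXiv:1910.05978 — 2 statements merged into one kernel-verified Lean document; each statement's English description precedes it below -/
import Mathlib

section
/- Let Ω = (0, L) × (0, 1) ⊂ ℝ² with L > 0, e_g = (0, −1), u_s ∈ ℝ, κ > 0, and let y denote the second coordinate function on Ω. Let u : cl(Ω) → ℝ² be continuously differentiable with div u = 0 in Ω and u·n = 0 on ∂Ω, and let φ : cl(Ω) × [0, T] → ℝ be continuously differentiable in time and twice continuously differentiable in space, satisfying ∂φ/∂t + (u + u_s e_g)·∇φ = κ Δφ in Ω, together with the boundary conditions (−u_s φ e_g + κ ∇φ)·n = 0 on the top and lateral walls Γ₁ ∪ Γ₂ ∪ Γ₄ and ∇φ·n = 0 on the bottom wall Γ₃. Then the potential energy E_p(t) = ∫_Ω φ y dx satisfies, for each t: ∫_Ω (∂φ/∂t) y dx = − ∫_Ω φ (u + u_s e_g)·e_g dx + κ ∫_Ω ∇φ·e_g dx. -/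
open MeasureTheory Set

/-- Partial derivative in the first spatial direction. -/
noncomputable def d1 (f : ℝ × ℝ → ℝ) (x : ℝ × ℝ) : ℝ := fderiv ℝ f x ((1 : ℝ), (0 : ℝ))

/-- Partial derivative in the second spatial direction. -/
noncomputable def d2 (f : ℝ × ℝ → ℝ) (x : ℝ × ℝ) : ℝ := fderiv ℝ f x ((0 : ℝ), (1 : ℝ))

/-- Gradient of a scalar field on `ℝ²`. -/
noncomputable def grad (f : ℝ × ℝ → ℝ) (x : ℝ × ℝ) : ℝ × ℝ := (d1 f x, d2 f x)

/-- Divergence of a vector field on `ℝ²`. -/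
noncomputable def div2 (w : ℝ × ℝ → ℝ × ℝ) (x : ℝ × ℝ) : ℝ :=
  d1 (fun y => (w y).1) x + d2 (fun y => (w y).2) x

/-- Laplacian of a scalar field on `ℝ²`. -/
noncomputable def lap (f : ℝ × ℝ → ℝ) (x : ℝ × ℝ) : ℝ := d1 (d1 f) x + d2 (d2 f) x

/-- Dot product on `ℝ²`. -/
def dot (a b : ℝ × ℝ) : ℝ := a.1 * b.1 + a.2 * b.2

/-- Unit vector in the direction of gravity. -/
noncomputable def eg : ℝ × ℝ := ((0 : ℝ), (-1 : ℝ))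

/-! The particle flux `J = κ ∇φ - φ (u + u_s e_g)` satisfies `div J = ∂φ/∂t` because `div u = 0`,
and the wall conditions together with `u·n = 0` give `J·n = 0` on the top and lateral walls.
Since `∇y = -e_g`, `div (y J) = y ∂φ/∂t - J·e_g`, and `y J` has zero normal component on the whole
boundary because the weight `y` vanishes on the bottom wall. The divergence theorem on the
rectangle then yields `∫ y ∂φ/∂t = ∫ J·e_g`. -/

section VectorCalculus

variable {f : ℝ × ℝ → ℝ} {V W : ℝ × ℝ → ℝ × ℝ} {x : ℝ × ℝ}

lemma div2_eq_fderiv (hV : DifferentiableAt ℝ V x) :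
    div2 V x = (fderiv ℝ V x (1, 0)).1 + (fderiv ℝ V x (0, 1)).2 := by
  simp [div2, d1, d2, fderiv.fst hV, fderiv.snd hV]

lemma div2_sub (hV : DifferentiableAt ℝ V x) (hW : DifferentiableAt ℝ W x) :
    div2 (fun y => V y - W y) x = div2 V x - div2 W x := by
  rw [div2_eq_fderiv (hV.fun_sub hW), div2_eq_fderiv hV, div2_eq_fderiv hW, fderiv_fun_sub hV hW]
  simp only [sub_apply, Prod.fst_sub, Prod.snd_sub]
  ring

lemma div2_const_smul (hV : DifferentiableAt ℝ V x) (c : ℝ) :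
    div2 (fun y => c • V y) x = c * div2 V x := by
  rw [div2_eq_fderiv (hV.fun_const_smul c), div2_eq_fderiv hV, fderiv_fun_const_smul hV]
  simp only [smul_apply, Prod.smul_fst, Prod.smul_snd, smul_eq_mul]
  ring

lemma div2_add_const (c : ℝ × ℝ) : div2 (fun y => V y + c) x = div2 V x := by
  simp only [div2, d1, d2, Prod.fst_add, Prod.snd_add, fderiv_add_const]

lemma div2_smul (hf : DifferentiableAt ℝ f x) (hV : DifferentiableAt ℝ V x) :
    div2 (fun y => f y • V y) x = f x * div2 V x + dot (V x) (grad f x) := by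
  rw [div2_eq_fderiv (hf.fun_smul hV), div2_eq_fderiv hV, fderiv_fun_smul hf hV]
  simp only [grad, d1, d2, dot, add_apply, smul_apply, ContinuousLinearMap.smulRight_apply,
    Prod.fst_add, Prod.snd_add, Prod.smul_fst, Prod.smul_snd, smul_eq_mul]
  ring

lemma div2_snd_smul (hW : DifferentiableAt ℝ W x) :
    div2 (fun y => y.2 • W y) x = x.2 * div2 W x + (W x).2 := by
  simp [div2_smul differentiableAt_snd hW, grad, d1, d2, dot, fderiv_snd]

lemma div2_grad : div2 (grad f) = lap f := rfl

lemma ContDiff.grad {m n : WithTop ℕ∞} (hf : ContDiff ℝ n f) (hmn : m + 1 ≤ n) :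
    ContDiff ℝ m (grad f) :=
  ((hf.fderiv_right hmn).clm_apply contDiff_const).prodMk
    ((hf.fderiv_right hmn).clm_apply contDiff_const)

@[fun_prop]
lemma Continuous.dot {α : Type*} [TopologicalSpace α] {a b : α → ℝ × ℝ} (ha : Continuous a)
    (hb : Continuous b) : Continuous fun x => dot (a x) (b x) := by
  unfold _root_.dot
  fun_prop

lemma ContDiff.continuous_div2 (hV : ContDiff ℝ 1 V) : Continuous (div2 V) := by
  have hV' := hV.continuous_fderiv one_ne_zero
  have : div2 V = fun x => (fderiv ℝ V x (1, 0)).1 + (fderiv ℝ V x (0, 1)).2 :=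
    funext fun x => div2_eq_fderiv (hV.differentiable one_ne_zero x)
  rw [this]
  fun_prop

end VectorCalculus

section DivergenceTheorem

lemma intervalIntegral_eq_zero_of_forall_Icc {f : ℝ → ℝ} {a b : ℝ} (hab : a ≤ b)
    (hf : ∀ x ∈ Icc a b, f x = 0) : ∫ x in a..b, f x = 0 := by
  rw [intervalIntegral.integral_congr (g := fun _ => 0)
    fun x hx => hf x (by rwa [uIcc_of_le hab] at hx)]
  simp

theorem integral_div2_eq_zero_of_normal_eq_zero {V : ℝ × ℝ → ℝ × ℝ} (hV : ContDiff ℝ 1 V)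
    {a b : ℝ × ℝ} (hab : a ≤ b)
    (hleft : ∀ y ∈ Icc a.2 b.2, (V (a.1, y)).1 = 0) (hright : ∀ y ∈ Icc a.2 b.2, (V (b.1, y)).1 = 0)
    (hbottom : ∀ x ∈ Icc a.1 b.1, (V (x, a.2)).2 = 0)
    (htop : ∀ x ∈ Icc a.1 b.1, (V (x, b.2)).2 = 0) :
    ∫ x in Icc a b, div2 V x = 0 := by
  have hd := hV.differentiable one_ne_zero
  have h := integral_divergence_prod_Icc_of_hasFDerivAt_of_le (fun x => (V x).1) (fun x => (V x).2)
    (fun x => fderiv ℝ (fun y => (V y).1) x) (fun x => fderiv ℝ (fun y => (V y).2) x) a b hab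
    hV.fst.continuous.continuousOn hV.snd.continuous.continuousOn
    (fun x _ => (hd x).fst.hasFDerivAt) (fun x _ => (hd x).snd.hasFDerivAt)
    hV.continuous_div2.integrableOn_Icc
  rwa [intervalIntegral_eq_zero_of_forall_Icc hab.1 hbottom,
    intervalIntegral_eq_zero_of_forall_Icc hab.1 htop,
    intervalIntegral_eq_zero_of_forall_Icc hab.2 hleft,
    intervalIntegral_eq_zero_of_forall_Icc hab.2 hright, sub_zero, add_zero, sub_zero] at h

lemma setIntegral_Ioo_prod_Ioo (f : ℝ × ℝ → ℝ) (a₁ b₁ a₂ b₂ : ℝ) :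
    ∫ x in Ioo a₁ b₁ ×ˢ Ioo a₂ b₂, f x = ∫ x in Icc (a₁, a₂) (b₁, b₂), f x := by
  rw [Icc_prod_eq, Measure.volume_eq_prod,
    Measure.restrict_congr_set (Measure.set_prod_ae_eq Ioo_ae_eq_Icc Ioo_ae_eq_Icc)]

lemma Continuous.integrableOn_Ioo_prod_Ioo {f : ℝ × ℝ → ℝ} (hf : Continuous f) (a₁ b₁ a₂ b₂ : ℝ) :
    IntegrableOn f (Ioo a₁ b₁ ×ˢ Ioo a₂ b₂) :=
  (hf.continuousOn.integrableOn_compact (isCompact_Icc.prod isCompact_Icc)).mono_set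
    (prod_mono Ioo_subset_Icc_self Ioo_subset_Icc_self)

theorem integral_div2_snd_smul_eq_zero {W : ℝ × ℝ → ℝ × ℝ} (hW : ContDiff ℝ 1 W) {L H : ℝ}
    (hL : 0 ≤ L) (hH : 0 ≤ H) (hleft : ∀ y ∈ Icc 0 H, (W (0, y)).1 = 0)
    (hright : ∀ y ∈ Icc 0 H, (W (L, y)).1 = 0) (htop : ∀ x ∈ Icc 0 L, (W (x, H)).2 = 0) :
    ∫ x in Ioo 0 L ×ˢ Ioo 0 H, div2 (fun y => y.2 • W y) x = 0 := by
  rw [setIntegral_Ioo_prod_Ioo]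
  refine integral_div2_eq_zero_of_normal_eq_zero (contDiff_snd.smul hW) ⟨hL, hH⟩
    (fun y hy => ?_) (fun y hy => ?_) (fun x _ => ?_) (fun x hx => ?_)
  · simp [hleft y hy]
  · simp [hright y hy]
  · simp
  · simp [htop x hx]

end DivergenceTheorem

noncomputable def particleFlux (κ u_s : ℝ) (u : ℝ × ℝ → ℝ × ℝ) (ψ : ℝ × ℝ → ℝ) (x : ℝ × ℝ) :
    ℝ × ℝ :=
  κ • grad ψ x - ψ x • (u x + u_s • eg)

section ParticleFlux

variable {κ u_s : ℝ} {u : ℝ × ℝ → ℝ × ℝ} {ψ : ℝ × ℝ → ℝ}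

lemma ContDiff.particleFlux (hu : ContDiff ℝ 1 u) (hψ : ContDiff ℝ 2 ψ) :
    ContDiff ℝ 1 (particleFlux κ u_s u ψ) :=
  ((hψ.grad le_rfl).const_smul κ).sub
    ((hψ.of_le one_le_two).smul (hu.add contDiff_const))

lemma div2_particleFlux {x : ℝ × ℝ} (hu : DifferentiableAt ℝ u x) (hψ : DifferentiableAt ℝ ψ x)
    (hgrad : DifferentiableAt ℝ (grad ψ) x) :
    div2 (particleFlux κ u_s u ψ) x
      = κ * lap ψ x - dot (u x + u_s • eg) (grad ψ x) - ψ x * div2 u x := by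
  have hw : DifferentiableAt ℝ (fun y => u y + u_s • eg) x := hu.add_const _
  unfold particleFlux
  rw [div2_sub (hgrad.fun_const_smul κ) (hψ.fun_smul hw), div2_const_smul hgrad,
    div2_smul hψ hw, div2_add_const, div2_grad]
  ring

lemma particleFlux_snd (x : ℝ × ℝ) :
    (particleFlux κ u_s u ψ x).2 = ψ x * dot (u x + u_s • eg) eg - κ * dot (grad ψ x) eg := by
  simp only [particleFlux, dot, eg, Prod.snd_sub, Prod.smul_snd, Prod.fst_add, Prod.snd_add,
    Prod.smul_fst, smul_eq_mul]
  ring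

lemma div2_snd_smul_particleFlux (hu : ContDiff ℝ 1 u) (hψ : ContDiff ℝ 2 ψ) (x : ℝ × ℝ) :
    div2 (fun y => y.2 • particleFlux κ u_s u ψ y) x
      = x.2 * (κ * lap ψ x - dot (u x + u_s • eg) (grad ψ x) - ψ x * div2 u x)
        + (ψ x * dot (u x + u_s • eg) eg - κ * dot (grad ψ x) eg) := by
  rw [div2_snd_smul ((hu.particleFlux hψ).differentiable one_ne_zero x),
    div2_particleFlux (hu.differentiable one_ne_zero x) (hψ.differentiable two_ne_zero x)
      ((hψ.grad le_rfl).differentiable one_ne_zero x), particleFlux_snd]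

lemma dot_particleFlux_eq_zero {p n : ℝ × ℝ}
    (hflux : dot ((-(u_s * ψ p)) • eg + κ • grad ψ p) n = 0) (hun : dot (u p) n = 0) :
    dot (particleFlux κ u_s u ψ p) n = 0 := by
  have : dot (particleFlux κ u_s u ψ p) n
      = dot ((-(u_s * ψ p)) • eg + κ • grad ψ p) n - ψ p * dot (u p) n := by
    simp only [particleFlux, dot, eg, Prod.fst_add, Prod.snd_add, Prod.fst_sub, Prod.snd_sub,
      Prod.smul_fst, Prod.smul_snd, smul_eq_mul]
    ring
  rw [this, hflux, hun]
  ring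

end ParticleFlux

theorem potential_energy_balance_general
    (L T u_s κ : ℝ) (hL : 0 < L)
    (u : ℝ × ℝ → ℝ × ℝ) (φ : ℝ × ℝ → ℝ → ℝ)
    (hu : ContDiff ℝ 1 u)
    (hφspace : ∀ t ∈ Icc (0 : ℝ) T, ContDiff ℝ 2 (fun x => φ x t))
    (hdiv : ∀ x ∈ Ioo 0 L ×ˢ Ioo (0 : ℝ) 1, div2 u x = 0)
    (htop : ∀ x ∈ Icc 0 L, (u (x, 1)).2 = 0)
    (hleft : ∀ y ∈ Icc (0 : ℝ) 1, (u (0, y)).1 = 0)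
    (hright : ∀ y ∈ Icc (0 : ℝ) 1, (u (L, y)).1 = 0)
    (htransport : ∀ t ∈ Icc (0 : ℝ) T, ∀ x ∈ Ioo 0 L ×ˢ Ioo (0 : ℝ) 1,
      deriv (fun s => φ x s) t + dot (u x + u_s • eg) (grad (fun y => φ y t) x)
        = κ * lap (fun y => φ y t) x)
    (hfluxtop : ∀ t ∈ Icc (0 : ℝ) T, ∀ x ∈ Icc 0 L,
      dot ((-(u_s * φ (x, 1) t)) • eg + κ • grad (fun y => φ y t) (x, 1)) ((0 : ℝ), 1) = 0)
    (hfluxleft : ∀ t ∈ Icc (0 : ℝ) T, ∀ y ∈ Icc (0 : ℝ) 1,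
      dot ((-(u_s * φ (0, y) t)) • eg + κ • grad (fun z => φ z t) (0, y)) ((-1 : ℝ), 0) = 0)
    (hfluxright : ∀ t ∈ Icc (0 : ℝ) T, ∀ y ∈ Icc (0 : ℝ) 1,
      dot ((-(u_s * φ (L, y) t)) • eg + κ • grad (fun z => φ z t) (L, y)) ((1 : ℝ), 0) = 0) :
    ∀ t ∈ Icc (0 : ℝ) T,
      (∫ x in Ioo 0 L ×ˢ Ioo (0 : ℝ) 1, (deriv (fun s => φ x s) t) * x.2)
        = -(∫ x in Ioo 0 L ×ˢ Ioo (0 : ℝ) 1, φ x t * dot (u x + u_s • eg) eg)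
          + κ * ∫ x in Ioo 0 L ×ˢ Ioo (0 : ℝ) 1, dot (grad (fun y => φ y t) x) eg := by
  intro t ht
  set ψ : ℝ × ℝ → ℝ := fun x => φ x t
  have hψ : ContDiff ℝ 2 ψ := hφspace t ht
  have hJ : ContDiff ℝ 1 (particleFlux κ u_s u ψ) := hu.particleFlux hψ
  have hdiv_flux : ∀ x ∈ Ioo 0 L ×ˢ Ioo (0 : ℝ) 1,
      div2 (fun y => y.2 • particleFlux κ u_s u ψ y) x = deriv (fun s => φ x s) t * x.2
        + (ψ x * dot (u x + u_s • eg) eg - κ * dot (grad ψ x) eg) := fun x hx => by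
    rw [div2_snd_smul_particleFlux hu hψ, hdiv x hx]
    linear_combination -x.2 * htransport t ht x hx
  have hno_flux : ∫ x in Ioo 0 L ×ˢ Ioo (0 : ℝ) 1,
      div2 (fun y => y.2 • particleFlux κ u_s u ψ y) x = 0 := by
    refine integral_div2_snd_smul_eq_zero hJ hL.le zero_le_one
      (fun y hy => ?_) (fun y hy => ?_) (fun x hx => ?_)
    · simpa [dot] using dot_particleFlux_eq_zero (ψ := ψ) (hfluxleft t ht y hy)
        (by simp [dot, hleft y hy])
    · simpa [dot] using dot_particleFlux_eq_zero (ψ := ψ) (hfluxright t ht y hy)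
        (by simp [dot, hright y hy])
    · simpa [dot] using dot_particleFlux_eq_zero (ψ := ψ) (hfluxtop t ht x hx)
        (by simp [dot, htop x hx])
  have hψc : Continuous ψ := hψ.continuous
  have hgradc : Continuous (grad ψ) := (hψ.grad (m := 1) le_rfl).continuous
  have huc : Continuous u := hu.continuous
  have hdivc := (contDiff_snd.smul hJ).continuous_div2
  calc (∫ x in Ioo 0 L ×ˢ Ioo (0 : ℝ) 1, (deriv (fun s => φ x s) t) * x.2)
      = ∫ x in Ioo 0 L ×ˢ Ioo (0 : ℝ) 1, div2 (fun y => y.2 • particleFlux κ u_s u ψ y) x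
          - (ψ x * dot (u x + u_s • eg) eg - κ * dot (grad ψ x) eg) :=
        setIntegral_congr_fun (measurableSet_Ioo.prod measurableSet_Ioo) fun x hx => by
          rw [hdiv_flux x hx]
          ring
    _ = _ := by
      rw [integral_sub, integral_sub, integral_const_mul, hno_flux]
      · ring
      all_goals exact Continuous.integrableOn_Ioo_prod_Ioo (by fun_prop) _ _ _ _

/-- Testing the particle transport equation with the height `y`: the potential
energy `E_p = ∫_Ω φ y` satisfies
`∫_Ω (∂φ/∂t) y = −∫_Ω φ (u + u_s e_g)·e_g + κ ∫_Ω ∇φ·e_g`. -/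
theorem potential_energy_balance
    (L T u_s κ : ℝ) (hL : 0 < L) (hκ : 0 < κ)
    (u : ℝ × ℝ → ℝ × ℝ) (φ : ℝ × ℝ → ℝ → ℝ)
    (hu : ContDiff ℝ 1 u)
    (hφspace : ∀ t ∈ Icc (0 : ℝ) T, ContDiff ℝ 2 (fun x => φ x t))
    (hφtime : ContDiff ℝ 1 (fun p : (ℝ × ℝ) × ℝ => φ p.1 p.2))
    (hdiv : ∀ x ∈ Ioo 0 L ×ˢ Ioo (0 : ℝ) 1, div2 u x = 0)
    (hbottom : ∀ x ∈ Icc 0 L, (u (x, 0)).2 = 0)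
    (htop : ∀ x ∈ Icc 0 L, (u (x, 1)).2 = 0)
    (hleft : ∀ y ∈ Icc (0 : ℝ) 1, (u (0, y)).1 = 0)
    (hright : ∀ y ∈ Icc (0 : ℝ) 1, (u (L, y)).1 = 0)
    (htransport : ∀ t ∈ Icc (0 : ℝ) T, ∀ x ∈ Ioo 0 L ×ˢ Ioo (0 : ℝ) 1,
      deriv (fun s => φ x s) t + dot (u x + u_s • eg) (grad (fun y => φ y t) x)
        = κ * lap (fun y => φ y t) x)
    (hfluxtop : ∀ t ∈ Icc (0 : ℝ) T, ∀ x ∈ Icc 0 L,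
      dot ((-(u_s * φ (x, 1) t)) • eg + κ • grad (fun y => φ y t) (x, 1)) ((0 : ℝ), 1) = 0)
    (hfluxleft : ∀ t ∈ Icc (0 : ℝ) T, ∀ y ∈ Icc (0 : ℝ) 1,
      dot ((-(u_s * φ (0, y) t)) • eg + κ • grad (fun z => φ z t) (0, y)) ((-1 : ℝ), 0) = 0)
    (hfluxright : ∀ t ∈ Icc (0 : ℝ) T, ∀ y ∈ Icc (0 : ℝ) 1,
      dot ((-(u_s * φ (L, y) t)) • eg + κ • grad (fun z => φ z t) (L, y)) ((1 : ℝ), 0) = 0)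
    (hfluxbottom : ∀ t ∈ Icc (0 : ℝ) T, ∀ x ∈ Icc 0 L,
      dot (grad (fun y => φ y t) (x, 0)) ((0 : ℝ), -1) = 0) :
    ∀ t ∈ Icc (0 : ℝ) T,
      (∫ x in Ioo 0 L ×ˢ Ioo (0 : ℝ) 1, (deriv (fun s => φ x s) t) * x.2)
        = -(∫ x in Ioo 0 L ×ˢ Ioo (0 : ℝ) 1, φ x t * dot (u x + u_s • eg) eg)
          + κ * ∫ x in Ioo 0 L ×ˢ Ioo (0 : ℝ) 1, dot (grad (fun y => φ y t) x) eg :=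
  potential_energy_balance_general L T u_s κ hL u φ hu hφspace hdiv htop hleft hright htransport
    hfluxtop hfluxleft hfluxright
end

section
/- Let Δt > 0 and let K, E, r, ε_v, ε_s : ℕ → ℝ be sequences satisfying, for every k ≥ 0, the per-step discrete energy balance K_{k+1} + E_{k+1} = K_k + E_k − Δt (ε_v(k+1) + ε_s(k+1)) + (Δt/2)(r_{k+1} − r_k). Define the energy residual E_res(n) := K_n + E_n + Δt ∑_{i=1}^{n} (ε_v(i) + ε_s(i)) − K_0 − E_0. If there is a constant C ≥ 0 with |r_k| ≤ C for all k, then |E_res(n)| ≤ Δt C for all n ≥ 0. In particular, the residual in the discrete energy balance is bounded uniformly in n and proportional to the time step Δt: it quantifies the mismatch due to time staggering and is not a cumulative error growing in time. -/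
/-- If the per-step discrete energy balance of the MEEVC scheme holds and the
staggering cross-term `r` is uniformly bounded by `C`, then the energy residual
`E_res(n) = K_n + E_n + Δt ∑_{i=1}^n (ε_v(i) + ε_s(i)) − K_0 − E_0` is bounded
by `Δt · C`, uniformly in `n`. -/
theorem energy_residual_bounded
    (Δt : ℝ) (hΔt : 0 < Δt) (K E r εv εs : ℕ → ℝ)
    (hstep : ∀ k : ℕ,
      K (k + 1) + E (k + 1)
        = K k + E k - Δt * (εv (k + 1) + εs (k + 1)) + (Δt / 2) * (r (k + 1) - r k))
    (C : ℝ) (hC : 0 ≤ C) (hr : ∀ k : ℕ, |r k| ≤ C) :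
    ∀ n : ℕ,
      |K n + E n + Δt * (∑ i ∈ Finset.Icc 1 n, (εv i + εs i)) - K 0 - E 0| ≤ Δt * C := by
  have key : ∀ n : ℕ,
      K n + E n + Δt * (∑ i ∈ Finset.Icc 1 n, (εv i + εs i)) - K 0 - E 0
        = (Δt / 2) * (r n - r 0) := by
    intro n
    induction n with
    | zero => simp
    | succ n ih =>
      rw [Finset.sum_Icc_succ_top (by omega : 1 ≤ n + 1), hstep n]
      ring_nf
      ring_nf at ih
      linarith
  intro n
  rw [key n]
  have h1 := hr n
  have h0 := hr 0
  have : |r n - r 0| ≤ 2 * C := by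
    calc |r n - r 0| ≤ |r n| + |r 0| := abs_sub _ _
    _ ≤ 2 * C := by linarith
  rw [abs_mul, abs_of_nonneg (by positivity : (0:ℝ) ≤ Δt / 2)]
  nlinarith [abs_nonneg (r n - r 0)]
end
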